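/- (Corollary 1) Assume Re(R(Ψ)) = {Re(Ψ w) : w ∈ ℂ^{p'}} equals ℝ^p and there exists x̄ ∈ C with Ψ^H x̄ = 0 (so that 0 ∈ C, X⋄ = Q = {0}, and U is finite). Then U = inf { ‖t + Ψ^‡ (∇L(0) + a − Re(Ψ t))‖_∞ : a ∈ N_C(0), t ∈ ℂ^{p'} }, where Ψ^‡ = Ψ^H (Re(Ψ Ψ^H))⁻¹ (Re(Ψ Ψ^H) is invertible under the stated assumption). -/

import Mathlib

open Matrix
open scoped RealInnerProductSpace ENNReal

noncomputable section

def cnorm1 {n : ℕ} (z : Fin n → ℂ) : ℝ := ∑ j, ‖z j‖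

noncomputable def cnormInf {n : ℕ} (z : Fin n → ℂ) : ℝ := ⨆ j, ‖z j‖

def psiH {p p' : ℕ} (Ψ : Matrix (Fin p) (Fin p') ℂ) (x : EuclideanSpace ℝ (Fin p)) :
    Fin p' → ℂ :=
  Matrix.mulVec Ψᴴ fun i => (x i : ℂ)

def rePsi {p p' : ℕ} (Ψ : Matrix (Fin p) (Fin p') ℂ) (w : Fin p' → ℂ) :
    EuclideanSpace ℝ (Fin p) :=
  WithLp.toLp 2 (fun i => (Matrix.mulVec Ψ w i).re)

def Gset {n : ℕ} (s : Fin n → ℂ) : Set (Fin n → ℂ) :=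
  {w | ∀ j, ‖w j‖ ≤ 1 ∧ (s j ≠ 0 → w j = s j / (‖s j‖ : ℂ))}

def normalCone {p : ℕ} (C : Set (EuclideanSpace ℝ (Fin p))) (x : EuclideanSpace ℝ (Fin p)) :
    Set (EuclideanSpace ℝ (Fin p)) :=
  {a | ∀ y ∈ C, ⟪a, y - x⟫ ≤ 0}

def XuSet {p p' : ℕ} (C : Set (EuclideanSpace ℝ (Fin p))) (L : EuclideanSpace ℝ (Fin p) → ℝ)
    (Ψ : Matrix (Fin p) (Fin p') ℂ) (u : ℝ) : Set (EuclideanSpace ℝ (Fin p)) :=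
  {x ∈ C | ∀ χ ∈ C, L x + u * cnorm1 (psiH Ψ x) ≤ L χ + u * cnorm1 (psiH Ψ χ)}

def QSet {p p' : ℕ} (C : Set (EuclideanSpace ℝ (Fin p))) (Ψ : Matrix (Fin p) (Fin p') ℂ) :
    Set (EuclideanSpace ℝ (Fin p)) :=
  {x ∈ C | ∀ χ ∈ C, cnorm1 (psiH Ψ x) ≤ cnorm1 (psiH Ψ χ)}

def XdSet {p p' : ℕ} (C : Set (EuclideanSpace ℝ (Fin p))) (L : EuclideanSpace ℝ (Fin p) → ℝ)
    (Ψ : Matrix (Fin p) (Fin p') ℂ) : Set (EuclideanSpace ℝ (Fin p)) :=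
  {x ∈ QSet C Ψ | ∀ χ ∈ QSet C Ψ, L x ≤ L χ}

def Ubound {p p' : ℕ} (C : Set (EuclideanSpace ℝ (Fin p))) (L : EuclideanSpace ℝ (Fin p) → ℝ)
    (Ψ : Matrix (Fin p) (Fin p') ℂ) : ℝ≥0∞ :=
  sInf (ENNReal.ofReal '' {u : ℝ | 0 ≤ u ∧ (XuSet C L Ψ u ∩ QSet C Ψ).Nonempty})


/-- `Ψ^‡ = Ψᴴ (Re (Ψ Ψᴴ))⁻¹`. -/
def PsiDdag {p p' : ℕ} (Ψ : Matrix (Fin p) (Fin p') ℂ) : Matrix (Fin p') (Fin p) ℂ :=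
  Ψᴴ * (((Ψ * Ψᴴ).map Complex.re)⁻¹.map Complex.ofReal)

/-!
Surjectivity of `w ↦ Re (Ψ w)` makes `Ψᴴ` injective on `ℝ^p`, because
`⟪Re (Ψ w), x⟫ = Re ⟪w, Ψᴴ x⟫`; hence `x̄ = 0`, `Q = X⋄ = {0}`, and `Re (Ψ Ψᴴ)`, which is
`x ↦ Re (Ψ (Ψᴴ x))`, is invertible. So `U` is the least `u` for which `0` minimises
`L + u ‖Ψᴴ ·‖₁` on `C`. As `u ‖Ψᴴ y‖₁` is the support function at `y` of the compact convex set
`K_u = Re (Ψ (closedBall 0 u))` (sup norm), the first-order condition reads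
`0 ≤ ⟪∇L 0, y⟫ + σ_{K_u} y` on `C`, and a minimax argument (Hahn–Banach separation of `K_u` from
the dual cone of `C`, then the bipolar theorem) turns it into `Re (Ψ v) - ∇L 0 ∈ N_C 0` for some
`‖v‖∞ ≤ u`. Finally `t ↦ t + Ψ^‡ (∇L 0 + a - Re (Ψ t))` parametrises all `v` with
`Re (Ψ v) = ∇L 0 + a`.
-/

open Filter Topology ComplexConjugate

theorem Monotone.sInf_image_upperClosure {α β : Type*} [Preorder α] [CompleteLattice β]
    {f : α → β} (hf : Monotone f) (s : Set α) : sInf (f '' upperClosure s) = sInf (f '' s) := by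
  refine le_antisymm (sInf_le_sInf (Set.image_mono subset_upperClosure)) (le_sInf ?_)
  rintro _ ⟨a, ha, rfl⟩
  obtain ⟨b, hb, hba⟩ := mem_upperClosure.1 ha
  exact (sInf_le (Set.mem_image_of_mem f hb)).trans (hf hba)

section ConvexAnalysis

variable {E : Type*} [NormedAddCommGroup E] [InnerProductSpace ℝ E] [CompleteSpace E]

theorem HasGradientAt.tendsto_slope_zero_right {L : E → ℝ} {g x : E} (hg : HasGradientAt L g x)
    (v : E) :
    Tendsto (fun t : ℝ => t⁻¹ * (L (x + t • v) - L x)) (𝓝[>] 0) (𝓝 ⟪g, v⟫) := by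
  simpa using (hg.hasFDerivAt.hasLineDerivAt v).tendsto_slope_zero_right

theorem ConvexOn.add_inner_gradient_le {C : Set E} {L : E → ℝ} (hL : ConvexOn ℝ C L) {g x y : E}
    (hx : x ∈ C) (hy : y ∈ C) (hg : HasGradientAt L g x) : L x + ⟪g, y - x⟫ ≤ L y := by
  suffices ⟪g, y - x⟫ ≤ L y - L x by linarith
  refine le_of_tendsto (hg.tendsto_slope_zero_right (y - x)) ?_
  filter_upwards [Ioo_mem_nhdsGT one_pos] with t ⟨ht0, ht1⟩
  have hconv := hL.2 hx hy (sub_nonneg.2 ht1.le) ht0.le (sub_add_cancel 1 t)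
  rw [show (1 - t) • x + t • y = x + t • (y - x) by
    rw [smul_sub, sub_smul, one_smul]; abel, smul_eq_mul, smul_eq_mul] at hconv
  rw [inv_mul_le_iff₀ ht0]
  linarith

theorem isMinOn_add_iff_inner_gradient_add_nonneg {C : Set E} {L φ : E → ℝ} {g : E}
    (hC : Convex ℝ C) (h0 : 0 ∈ C) (hL : ConvexOn ℝ C L) (hg : HasGradientAt L g 0)
    (hφ : ∀ t : ℝ, 0 ≤ t → ∀ y, φ (t • y) = t * φ y) :
    (∀ y ∈ C, L 0 + φ 0 ≤ L y + φ y) ↔ ∀ y ∈ C, 0 ≤ ⟪g, y⟫ + φ y := by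
  have hφ0 : φ 0 = 0 := by simpa using hφ 0 le_rfl 0
  refine ⟨fun hmin y hy => ?_, fun h y hy => ?_⟩
  · suffices -φ y ≤ ⟪g, y⟫ by linarith
    refine ge_of_tendsto (hg.tendsto_slope_zero_right y) ?_
    filter_upwards [Ioo_mem_nhdsGT one_pos] with t ⟨ht0, ht1⟩
    have := hmin (t • y) (hC.smul_mem_of_zero_mem h0 hy ⟨ht0.le, ht1.le⟩)
    rw [hφ t ht0.le, hφ0] at this
    rw [zero_add, le_inv_mul_iff₀ ht0]
    linarith
  · have := hL.add_inner_gradient_le h0 hy hg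
    rw [sub_zero] at this
    linarith [h y hy]

open ProperCone in
theorem ProperCone.innerDual_innerDual_subset_closure_hull {C : Set E} (h0 : 0 ∈ C) :
    (innerDual (innerDual C : Set E) : Set E) ⊆ closure (ConvexCone.hull ℝ C) := by
  let P : ProperCone ℝ E :=
    ⟨((ConvexCone.hull ℝ C).toPointedCone (ConvexCone.subset_hull h0)).closure, isClosed_closure⟩
  have hCP : C ⊆ P := ConvexCone.subset_hull.trans subset_closure
  exact fun y hy => (innerDual_innerDual P).le
    (innerDual_le_innerDual (innerDual_le_innerDual hCP) hy)

/-- Sion's minimax theorem for the bilinear form `(y, k) ↦ ⟪y, k⟫` on `C × K`, `K` compact. -/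
theorem exists_forall_inner_nonneg_of_forall_exists {K C : Set E} (hK : IsCompact K)
    (hKc : Convex ℝ K) (hC : Convex ℝ C) (h0 : 0 ∈ C) (h : ∀ y ∈ C, ∃ k ∈ K, 0 ≤ ⟪y, k⟫) :
    ∃ k ∈ K, ∀ y ∈ C, 0 ≤ ⟪y, k⟫ := by
  -- A functional separating `K` from `innerDual C` lies in the bipolar of `C`, the closed cone
  -- generated by `C`, where the support function of `K` is nonnegative.
  by_contra! hKD
  have hdisj : Disjoint K (ProperCone.innerDual C) :=
    Set.disjoint_left.2 fun k hk hkD => by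
      obtain ⟨y, hy, hyk⟩ := hKD k hk
      exact hyk.not_ge (hkD hy)
  obtain ⟨f, a, b, hfK, hab, hfD⟩ := geometric_hahn_banach_compact_closed hKc hK
    (ProperCone.innerDual C).convex (ProperCone.innerDual C).isClosed hdisj
  have hb : b < 0 := by simpa using hfD 0 (ProperCone.innerDual C).zero_mem
  set d := (InnerProductSpace.toDual ℝ E).symm f
  have hdf (x : E) : ⟪d, x⟫ = f x := InnerProductSpace.toDual_symm_apply
  -- `f` is bounded below by `b < 0` on the cone `innerDual C`, hence nonnegative there
  have hd : d ∈ ProperCone.innerDual (ProperCone.innerDual C : Set E) := by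
    refine ProperCone.mem_innerDual.2 fun q hq => ?_
    rw [real_inner_comm, hdf]
    by_contra! hfq
    have := hfD ((b / f q) • q) <| ProperCone.mem_innerDual.2 fun x hx => by
      rw [real_inner_smul_right]
      exact mul_nonneg (div_pos_of_neg_of_neg hb hfq).le (hq hx)
    simp [div_mul_cancel₀ _ hfq.ne] at this
  set σ : E → ℝ := fun y => sSup ((fun k => ⟪y, k⟫) '' K)
  have hσ : Continuous σ := hK.continuous_sSup continuous_inner
  have hKne : K.Nonempty := let ⟨k, hk, _⟩ := h 0 h0; ⟨k, hk⟩
  have himage (y : E) : IsCompact ((fun k => ⟪y, k⟫) '' K) :=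
    hK.image (continuous_const.inner continuous_id)
  have hσhull : (ConvexCone.hull ℝ C : Set E) ⊆ {y | 0 ≤ σ y} := by
    intro y hy
    obtain ⟨r, hr, x, hx, rfl⟩ := (ConvexCone.mem_hull_of_convex hC).1 hy
    obtain ⟨k, hk, hxk⟩ := h x hx
    refine le_csSup_of_le (himage _).bddAbove ⟨k, hk, rfl⟩ ?_
    simpa [real_inner_smul_left] using mul_nonneg hr.le hxk
  have hσd : 0 ≤ σ d := closure_minimal hσhull (isClosed_le continuous_const hσ)
    (ProperCone.innerDual_innerDual_subset_closure_hull h0 hd)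
  obtain ⟨k, hk, hkd⟩ := (himage d).sSup_mem (hKne.image _)
  linarith [hfK k hk, hdf k, show ⟪d, k⟫ = σ d from hkd]

end ConvexAnalysis

section ComplexVector

variable {n : ℕ}

theorem cnormInf_eq_norm (z : Fin n → ℂ) : cnormInf z = ‖z‖ :=
  le_antisymm (Real.iSup_le (norm_le_pi_norm z) (norm_nonneg z)) <|
    (pi_norm_le_iff_of_nonneg (Real.iSup_nonneg fun _ => norm_nonneg _)).2 fun j =>
      le_ciSup (f := fun j => ‖z j‖) (Set.finite_range _).bddAbove j

theorem cnorm1_nonneg (z : Fin n → ℂ) : 0 ≤ cnorm1 z :=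
  Finset.sum_nonneg fun _ _ => norm_nonneg _

theorem cnorm1_eq_zero_iff {z : Fin n → ℂ} : cnorm1 z = 0 ↔ z = 0 := by
  simp [cnorm1, Finset.sum_eq_zero_iff_of_nonneg, funext_iff]

theorem cnorm1_real_smul (c : ℝ) (z : Fin n → ℂ) : cnorm1 ((c : ℂ) • z) = |c| * cnorm1 z := by
  simp [cnorm1, Finset.mul_sum]

theorem re_sum_mul_conj_self (s : Fin n → ℂ) : (∑ j, s j * conj (s j)).re = ∑ j, ‖s j‖ ^ 2 := by
  simp only [Complex.mul_conj, Complex.normSq_eq_norm_sq, Complex.re_sum, Complex.ofReal_re]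

theorem abs_re_sum_mul_conj_le (v s : Fin n → ℂ) :
    |(∑ j, v j * conj (s j)).re| ≤ ‖v‖ * cnorm1 s := by
  rw [cnorm1, Finset.mul_sum]
  refine (Complex.abs_re_le_norm _).trans <| (norm_sum_le _ _).trans <|
    Finset.sum_le_sum fun j _ => ?_
  rw [norm_mul, Complex.norm_conj]
  exact mul_le_mul_of_nonneg_right (norm_le_pi_norm v j) (norm_nonneg _)

theorem exists_norm_le_re_sum_mul_conj_eq (s : Fin n → ℂ) {u : ℝ} (hu : 0 ≤ u) :
    ∃ v : Fin n → ℂ, ‖v‖ ≤ u ∧ (∑ j, v j * conj (s j)).re = u * cnorm1 s := by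
  -- `v = u • sgn s`, where `s j / ‖s j‖` is the junk value `0` if `s j = 0`
  refine ⟨fun j => u * (s j / ‖s j‖), (pi_norm_le_iff_of_nonneg hu).2 fun j => ?_, ?_⟩
  · rw [norm_mul, norm_div, Complex.norm_real, Complex.norm_real, norm_norm, Real.norm_of_nonneg hu]
    exact mul_le_of_le_one_right hu (div_self_le_one _)
  · rw [cnorm1, Finset.mul_sum, Complex.re_sum]
    refine Finset.sum_congr rfl fun j _ => ?_
    rcases eq_or_ne (s j) 0 with hj | hj
    · simp [hj]
    · rw [mul_assoc, div_mul_eq_mul_div, Complex.mul_conj, Complex.normSq_eq_norm_sq]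
      norm_cast
      field_simp

end ComplexVector

section Psi

variable {p p' : ℕ} (Ψ : Matrix (Fin p) (Fin p') ℂ)

theorem psiH_smul (c : ℝ) (x : EuclideanSpace ℝ (Fin p)) :
    psiH Ψ (c • x) = (c : ℂ) • psiH Ψ x := by
  rw [psiH, psiH, ← mulVec_smul]
  congr 1
  ext i
  simp

theorem psiH_zero : psiH Ψ 0 = 0 := by
  simpa using psiH_smul Ψ 0 0

def rePsiLinearMap : (Fin p' → ℂ) →ₗ[ℝ] EuclideanSpace ℝ (Fin p) where
  toFun := rePsi Ψ
  map_add' v w := by ext i; simp [rePsi, mulVec_add]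
  map_smul' c v := by ext i; simp [rePsi, mulVec_smul]

theorem rePsi_add (v w : Fin p' → ℂ) : rePsi Ψ (v + w) = rePsi Ψ v + rePsi Ψ w :=
  map_add (rePsiLinearMap Ψ) v w

theorem rePsi_neg (v : Fin p' → ℂ) : rePsi Ψ (-v) = -rePsi Ψ v :=
  map_neg (rePsiLinearMap Ψ) v

theorem inner_rePsi (v : Fin p' → ℂ) (x : EuclideanSpace ℝ (Fin p)) :
    ⟪rePsi Ψ v, x⟫ = (∑ j, v j * conj (psiH Ψ x j)).re := by
  simp only [rePsi, psiH, PiLp.inner_apply, mulVec, dotProduct, conjTranspose_apply, map_sum,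
    map_mul, Complex.star_def, Complex.conj_conj, Complex.conj_ofReal, RCLike.inner_apply,
    conj_trivial, Finset.mul_sum, Complex.re_sum]
  rw [Finset.sum_comm]
  refine Finset.sum_congr rfl fun j _ => Finset.sum_congr rfl fun i _ => ?_
  rw [show v j * (Ψ i j * x i) = x i * (Ψ i j * v j) by ring, Complex.re_ofReal_mul]

theorem rePsi_psiH (x : EuclideanSpace ℝ (Fin p)) :
    rePsi Ψ (psiH Ψ x) = WithLp.toLp 2 ((Ψ * Ψᴴ).map Complex.re *ᵥ x.ofLp) := by
  ext i
  simp only [rePsi, psiH, mulVec_mulVec, WithLp.ofLp_toLp]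
  simp [mulVec, dotProduct, Complex.re_sum]

theorem eq_zero_of_psiH_eq_zero {Ψ : Matrix (Fin p) (Fin p') ℂ}
    (hsurj : ∀ v : EuclideanSpace ℝ (Fin p), ∃ w : Fin p' → ℂ, rePsi Ψ w = v)
    {x : EuclideanSpace ℝ (Fin p)} (hx : psiH Ψ x = 0) : x = 0 := by
  obtain ⟨w, hw⟩ := hsurj x
  have := inner_rePsi Ψ w x
  rw [hw, hx] at this
  simpa using this

theorem isUnit_det_re_mul_conjTranspose {Ψ : Matrix (Fin p) (Fin p') ℂ}
    (hsurj : ∀ v : EuclideanSpace ℝ (Fin p), ∃ w : Fin p' → ℂ, rePsi Ψ w = v) :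
    IsUnit ((Ψ * Ψᴴ).map Complex.re).det := by
  rw [isUnit_iff_ne_zero]
  intro hdet
  obtain ⟨x, hx0, hMx⟩ := exists_mulVec_eq_zero_iff.2 hdet
  set y : EuclideanSpace ℝ (Fin p) := WithLp.toLp 2 x
  have hnorm : ∑ j, ‖psiH Ψ y j‖ ^ 2 = 0 := by
    rw [← re_sum_mul_conj_self, ← inner_rePsi, rePsi_psiH]
    simp [y, hMx]
  have hψ : psiH Ψ y = 0 := funext fun j => by
    simpa using (Finset.sum_eq_zero_iff_of_nonneg fun j _ => sq_nonneg ‖psiH Ψ y j‖).1 hnorm j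
      (Finset.mem_univ j)
  exact hx0 (congrArg WithLp.ofLp (eq_zero_of_psiH_eq_zero hsurj hψ))

variable {Ψ} in
theorem rePsi_PsiDdag_mulVec (hdet : IsUnit ((Ψ * Ψᴴ).map Complex.re).det)
    (y : EuclideanSpace ℝ (Fin p)) : rePsi Ψ (PsiDdag Ψ *ᵥ fun i => (y i : ℂ)) = y := by
  set M := (Ψ * Ψᴴ).map Complex.re
  have : PsiDdag Ψ *ᵥ (fun i => (y i : ℂ)) = psiH Ψ (WithLp.toLp 2 (M⁻¹ *ᵥ y.ofLp)) := by
    rw [PsiDdag, ← mulVec_mulVec, psiH]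
    congr 1
    ext i
    exact (Complex.ofRealHom.map_mulVec M⁻¹ y.ofLp i).symm
  rw [this, rePsi_psiH, WithLp.ofLp_toLp, mulVec_mulVec, mul_nonsing_inv M hdet, one_mulVec]

end Psi

section Optimality

variable {p p' : ℕ} {C : Set (EuclideanSpace ℝ (Fin p))} {L : EuclideanSpace ℝ (Fin p) → ℝ}
  {g : EuclideanSpace ℝ (Fin p)} {Ψ : Matrix (Fin p) (Fin p') ℂ} {u : ℝ}

theorem zero_mem_XuSet_iff (hC : Convex ℝ C) (h0 : 0 ∈ C) (hL : ConvexOn ℝ C L)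
    (hg : HasGradientAt L g 0) :
    0 ∈ XuSet C L Ψ u ↔ ∀ y ∈ C, 0 ≤ ⟪g, y⟫ + u * cnorm1 (psiH Ψ y) := by
  refine (and_iff_right h0).trans <| isMinOn_add_iff_inner_gradient_add_nonneg
    (φ := fun x => u * cnorm1 (psiH Ψ x)) hC h0 hL hg fun t ht y => ?_
  rw [psiH_smul, cnorm1_real_smul, abs_of_nonneg ht]
  ring

theorem forall_inner_add_nonneg_iff (hC : Convex ℝ C) (h0 : 0 ∈ C) (hu : 0 ≤ u) :
    (∀ y ∈ C, 0 ≤ ⟪g, y⟫ + u * cnorm1 (psiH Ψ y)) ↔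
      ∃ v : Fin p' → ℂ, ‖v‖ ≤ u ∧ rePsi Ψ v - g ∈ normalCone C 0 := by
  constructor
  · intro h
    set K := (fun v => g - rePsi Ψ v) '' Metric.closedBall 0 u
    have hcont : Continuous fun v => g - rePsi Ψ v :=
      continuous_const.sub (rePsiLinearMap Ψ).continuous_of_finiteDimensional
    have hKc : Convex ℝ K :=
      (convex_closedBall 0 u).affine_image
        (AffineMap.const ℝ (Fin p' → ℂ) g - (rePsiLinearMap Ψ).toAffineMap)
    obtain ⟨_, ⟨v, hv, rfl⟩, hvC⟩ := exists_forall_inner_nonneg_of_forall_exists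
      ((isCompact_closedBall 0 u).image hcont) hKc hC h0 fun y hy => by
        obtain ⟨v, hv, hvy⟩ := exists_norm_le_re_sum_mul_conj_eq (psiH Ψ y) hu
        refine ⟨g - rePsi Ψ (-v), ⟨-v, by simpa using hv, rfl⟩, ?_⟩
        rw [← inner_rePsi] at hvy
        have := h y hy
        rw [rePsi_neg, sub_neg_eq_add, inner_add_right]
        linarith [real_inner_comm g y, real_inner_comm (rePsi Ψ v) y]
    refine ⟨v, by simpa using hv, fun y hy => ?_⟩
    rw [sub_zero, real_inner_comm, ← neg_sub, inner_neg_right, neg_nonpos]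
    exact hvC y hy
  · rintro ⟨v, hv, hvN⟩ y hy
    have h1 := hvN y hy
    have h2 := neg_abs_le (∑ j, v j * conj (psiH Ψ y j)).re
    have h3 := abs_re_sum_mul_conj_le v (psiH Ψ y)
    rw [← inner_rePsi] at h2 h3
    rw [sub_zero, inner_sub_left] at h1
    linarith [mul_le_mul_of_nonneg_right hv (cnorm1_nonneg (psiH Ψ y))]

theorem zero_mem_XuSet_iff_exists (hC : Convex ℝ C) (h0 : 0 ∈ C) (hL : ConvexOn ℝ C L)
    (hg : HasGradientAt L g 0) (hu : 0 ≤ u) :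
    0 ∈ XuSet C L Ψ u ↔ ∃ v : Fin p' → ℂ, ‖v‖ ≤ u ∧ rePsi Ψ v - g ∈ normalCone C 0 :=
  (zero_mem_XuSet_iff hC h0 hL hg).trans (forall_inner_add_nonneg_iff hC h0 hu)

theorem QSet_eq_singleton_zero
    (hsurj : ∀ v : EuclideanSpace ℝ (Fin p), ∃ w : Fin p' → ℂ, rePsi Ψ w = v) (h0 : 0 ∈ C) :
    QSet C Ψ = {0} := by
  ext x
  refine ⟨fun ⟨_, hmin⟩ => ?_, ?_⟩
  · have := hmin 0 h0
    rw [psiH_zero, cnorm1_eq_zero_iff.2 rfl] at this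
    exact eq_zero_of_psiH_eq_zero hsurj
      (cnorm1_eq_zero_iff.1 (le_antisymm this (cnorm1_nonneg _)))
  · rintro rfl
    exact ⟨h0, fun χ _ => by simpa [psiH_zero, cnorm1_eq_zero_iff.2] using cnorm1_nonneg _⟩

theorem Ubound_eq_sInf_norm (hC : Convex ℝ C) (h0 : 0 ∈ C) (hL : ConvexOn ℝ C L)
    (hg : HasGradientAt L g 0) (hQ : QSet C Ψ = {0}) :
    Ubound C L Ψ =
      sInf (ENNReal.ofReal '' ((‖·‖) '' {v : Fin p' → ℂ | rePsi Ψ v - g ∈ normalCone C 0})) := by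
  rw [Ubound, ← ENNReal.ofReal_mono.sInf_image_upperClosure ((‖·‖) '' _)]
  congr 2
  ext u
  simp only [Set.mem_ofPred_eq, hQ, Set.inter_singleton_nonempty, SetLike.mem_coe,
    mem_upperClosure, Set.exists_mem_image]
  constructor
  · rintro ⟨hu, hX⟩
    obtain ⟨v, hv, hvN⟩ := (zero_mem_XuSet_iff_exists hC h0 hL hg hu).1 hX
    exact ⟨v, hvN, hv⟩
  · rintro ⟨v, hvN, hv⟩
    have hu := (norm_nonneg v).trans hv
    exact ⟨hu, (zero_mem_XuSet_iff_exists hC h0 hL hg hu).2 ⟨v, hv, hvN⟩⟩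

end Optimality

theorem setOf_cnormInf_PsiDdag_eq {p p' : ℕ} {Ψ : Matrix (Fin p) (Fin p') ℂ}
    (hdet : IsUnit ((Ψ * Ψᴴ).map Complex.re).det) (g : EuclideanSpace ℝ (Fin p))
    (N : Set (EuclideanSpace ℝ (Fin p))) :
    {r : ℝ | ∃ a ∈ N, ∃ t : Fin p' → ℂ,
        r = cnormInf (t + (PsiDdag Ψ).mulVec fun i => ((g i + a i - (Ψ.mulVec t i).re : ℝ) : ℂ))} =
      (‖·‖) '' {v : Fin p' → ℂ | rePsi Ψ v - g ∈ N} := by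
  ext r
  simp only [cnormInf_eq_norm]
  constructor
  · rintro ⟨a, ha, t, rfl⟩
    refine ⟨_, ?_, rfl⟩
    show rePsi Ψ (t + PsiDdag Ψ *ᵥ fun i => ((g + a - rePsi Ψ t) i : ℂ)) - g ∈ N
    rw [rePsi_add, rePsi_PsiDdag_mulVec hdet, add_sub_cancel, add_sub_cancel_left]
    exact ha
  · rintro ⟨v, hv, rfl⟩
    refine ⟨_, hv, v, ?_⟩
    simp [rePsi, ← Pi.zero_def]

theorem zero_mem_normalCone {p : ℕ} (C : Set (EuclideanSpace ℝ (Fin p)))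
    (x : EuclideanSpace ℝ (Fin p)) : 0 ∈ normalCone C x :=
  fun y _ => by simp

theorem statement_12_general {p p' : ℕ}
    (C : Set (EuclideanSpace ℝ (Fin p)))
    (hCcv : Convex ℝ C)
    (L : EuclideanSpace ℝ (Fin p) → ℝ) (hLcv : ConvexOn ℝ Set.univ L)
    (gradL : EuclideanSpace ℝ (Fin p) → EuclideanSpace ℝ (Fin p))
    (hLd : ∀ x, HasGradientAt L (gradL x) x)
    (Ψ : Matrix (Fin p) (Fin p') ℂ)
    (hsurj : ∀ v : EuclideanSpace ℝ (Fin p), ∃ w : Fin p' → ℂ, rePsi Ψ w = v)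
    (hbar : ∃ x ∈ C, psiH Ψ x = 0) :
    (0 : EuclideanSpace ℝ (Fin p)) ∈ C ∧
    QSet C Ψ = {0} ∧
    XdSet C L Ψ = {0} ∧
    IsUnit ((Ψ * Ψᴴ).map Complex.re).det ∧
    Ubound C L Ψ ≠ ⊤ ∧
    Ubound C L Ψ = sInf (ENNReal.ofReal ''
      {r : ℝ | ∃ a ∈ normalCone C (0 : EuclideanSpace ℝ (Fin p)), ∃ t : Fin p' → ℂ,
        r = cnormInf (t + (PsiDdag Ψ).mulVec fun i =>
          ((gradL 0 i + a i - (Ψ.mulVec t i).re : ℝ) : ℂ))}) := by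
  obtain ⟨x, hxC, hx⟩ := hbar
  have h0 : (0 : EuclideanSpace ℝ (Fin p)) ∈ C := eq_zero_of_psiH_eq_zero hsurj hx ▸ hxC
  have hQ := QSet_eq_singleton_zero hsurj h0
  have hdet := isUnit_det_re_mul_conjTranspose hsurj
  have hU := Ubound_eq_sInf_norm hCcv h0 (hLcv.subset (Set.subset_univ C) hCcv) (hLd 0) hQ
  refine ⟨h0, hQ, by ext; simp +contextual [XdSet, hQ], hdet, ?_,
    by rw [hU, setOf_cnormInf_PsiDdag_eq hdet]⟩
  obtain ⟨v, hv⟩ := hsurj (gradL 0)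
  have hvN : rePsi Ψ v - gradL 0 ∈ normalCone C 0 := by
    rw [hv, sub_self]
    exact zero_mem_normalCone C 0
  exact hU ▸ ne_top_of_le_ne_top ENNReal.ofReal_ne_top (sInf_le ⟨‖v‖, ⟨v, hvN, rfl⟩, rfl⟩)

theorem statement_12 {p p' : ℕ} (hp : 0 < p) (hp' : 0 < p')
    (C : Set (EuclideanSpace ℝ (Fin p))) (hCne : C.Nonempty) (hCcl : IsClosed C)
    (hCcv : Convex ℝ C)
    (L : EuclideanSpace ℝ (Fin p) → ℝ) (hLcv : ConvexOn ℝ Set.univ L)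
    (gradL : EuclideanSpace ℝ (Fin p) → EuclideanSpace ℝ (Fin p))
    (hLd : ∀ x, HasGradientAt L (gradL x) x)
    (hLb : BddBelow (L '' C))
    (Ψ : Matrix (Fin p) (Fin p') ℂ)
    (hsurj : ∀ v : EuclideanSpace ℝ (Fin p), ∃ w : Fin p' → ℂ, rePsi Ψ w = v)
    (hbar : ∃ x ∈ C, psiH Ψ x = 0) :
    (0 : EuclideanSpace ℝ (Fin p)) ∈ C ∧
    QSet C Ψ = {0} ∧
    XdSet C L Ψ = {0} ∧
    IsUnit ((Ψ * Ψᴴ).map Complex.re).det ∧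
    Ubound C L Ψ ≠ ⊤ ∧
    Ubound C L Ψ = sInf (ENNReal.ofReal ''
      {r : ℝ | ∃ a ∈ normalCone C (0 : EuclideanSpace ℝ (Fin p)), ∃ t : Fin p' → ℂ,
        r = cnormInf (t + (PsiDdag Ψ).mulVec fun i =>
          ((gradL 0 i + a i - (Ψ.mulVec t i).re : ℝ) : ℂ))}) :=
  statement_12_general C hCcv L hLcv gradL hLd Ψ hsurj hbar
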